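/- arXiv:1602.01872 — 2 statements merged into one kernel-verified Lean document; each statement's English description precedes it below -/
import Mathlib

section
/- For every k ≥ 0 the conjugate gradient iterates satisfy the convergence estimate in the energy norm induced by A: ⟨A(φ* − φ_k), φ* − φ_k⟩ ≤ e^{−2σk} · ⟨A(φ* − φ₀), φ* − φ₀⟩, where σ = log((M+m)/(M−m)); equivalently, ‖φ* − φ_k‖_A ≤ e^{−σk}‖φ* − φ₀‖_A with ‖e‖_A := ⟨Ae, e⟩^{1/2}. -/
open scoped RealInnerProductSpace

lemma kantorovich {H : Type*} [NormedAddCommGroup H] [InnerProductSpace ℝ H]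
    (A : H →L[ℝ] H) (hsa : ∀ x y : H, ⟪A x, y⟫ = ⟪x, A y⟫)
    (m M : ℝ) (hm : 0 < m) (hmM : m < M)
    (hlow : ∀ x : H, m * ‖x‖ ^ 2 ≤ ⟪A x, x⟫)
    (hupp : ∀ x : H, ⟪A x, x⟫ ≤ M * ‖x‖ ^ 2)
    (e : H) :
    4 * M * m * (⟪A e, e⟫ * ⟪A (A e), A e⟫) ≤ (M + m) ^ 2 * ⟪A e, A e⟫ ^ 2 := by
  have e21 : ⟪A (A e), e⟫ = ⟪A e, A e⟫ := hsa (A e) e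
  have e0 : ⟪e, e⟫ = ‖e‖ ^ 2 := real_inner_self_eq_norm_sq e
  have ece : ⟪e, A e⟫ = ⟪A e, e⟫ := real_inner_comm (A e) e
  have h1 := hlow (M • e - A e)
  have h2 := hupp (A e - m • e)
  have hx : ‖M • e - A e‖ ^ 2 = M ^ 2 * ‖e‖ ^ 2 - 2 * M * ⟪A e, e⟫ + ⟪A e, A e⟫ := by
    rw [← real_inner_self_eq_norm_sq]
    simp only [inner_sub_left, inner_sub_right, real_inner_smul_left, real_inner_smul_right]
    rw [e0, ece]; ring
  have hy : ‖A e - m • e‖ ^ 2 = ⟪A e, A e⟫ - 2 * m * ⟪A e, e⟫ + m ^ 2 * ‖e‖ ^ 2 := by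
    rw [← real_inner_self_eq_norm_sq]
    simp only [inner_sub_left, inner_sub_right, real_inner_smul_left, real_inner_smul_right]
    rw [e0, ece]; ring
  have hAx : ⟪A (M • e - A e), M • e - A e⟫
      = M ^ 2 * ⟪A e, e⟫ - 2 * M * ⟪A e, A e⟫ + ⟪A (A e), A e⟫ := by
    simp only [map_sub, map_smul, inner_sub_left, inner_sub_right, real_inner_smul_left,
      real_inner_smul_right]
    rw [e21]; ring
  have hAy : ⟪A (A e - m • e), A e - m • e⟫
      = ⟪A (A e), A e⟫ - 2 * m * ⟪A e, A e⟫ + m ^ 2 * ⟪A e, e⟫ := by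
    simp only [map_sub, map_smul, inner_sub_left, inner_sub_right, real_inner_smul_left,
      real_inner_smul_right]
    rw [e21]; ring
  rw [hx, hAx] at h1
  rw [hy, hAy] at h2
  set p0 : ℝ := ‖e‖ ^ 2
  set p1 : ℝ := ⟪A e, e⟫
  set p2 : ℝ := ⟪A e, A e⟫
  set p3 : ℝ := ⟪A (A e), A e⟫
  have hMm : (0:ℝ) < M - m := by linarith
  have t1 : 0 ≤ m * ((M ^ 2 * p1 - 2 * M * p2 + p3) - m * (M ^ 2 * p0 - 2 * M * p1 + p2)) :=
    mul_nonneg hm.le (by linarith)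
  have t2 : 0 ≤ M * (M * (p2 - 2 * m * p1 + m ^ 2 * p0) - (p3 - 2 * m * p2 + m ^ 2 * p1)) :=
    mul_nonneg (by linarith) (by linarith)
  have key : (M - m) * ((M + m) * p2 - p3 - M * m * p1)
      = m * ((M ^ 2 * p1 - 2 * M * p2 + p3) - m * (M ^ 2 * p0 - 2 * M * p1 + p2))
        + M * (M * (p2 - 2 * m * p1 + m ^ 2 * p0) - (p3 - 2 * m * p2 + m ^ 2 * p1)) := by ring
  have hmain : p3 + M * m * p1 ≤ (M + m) * p2 := by
    have h0 : 0 ≤ (M - m) * ((M + m) * p2 - p3 - M * m * p1) := by rw [key]; linarith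
    nlinarith [h0]
  have hp1 : 0 ≤ p1 := le_trans (by positivity) (hlow e)
  have hp3 : 0 ≤ p3 := le_trans (by positivity) (hlow (A e))
  have hp2 : 0 ≤ p2 := real_inner_self_nonneg
  have s1 : 4 * (M * m * p1) * p3 ≤ (p3 + M * m * p1) ^ 2 := by
    nlinarith [sq_nonneg (p3 - M * m * p1)]
  have s2 : (p3 + M * m * p1) ^ 2 ≤ ((M + m) * p2) ^ 2 := by
    have h0 : 0 ≤ p3 + M * m * p1 :=
      add_nonneg hp3 (mul_nonneg (mul_nonneg (by linarith) hm.le) hp1)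
    exact pow_le_pow_left₀ h0 hmain 2
  calc 4 * M * m * (p1 * p3) = 4 * (M * m * p1) * p3 := by ring
    _ ≤ (p3 + M * m * p1) ^ 2 := s1
    _ ≤ ((M + m) * p2) ^ 2 := s2
    _ = (M + m) ^ 2 * p2 ^ 2 := by ring

set_option maxHeartbeats 1000000

/-- Convergence of the conjugate gradient method in the energy norm induced by `A`:
`⟨A(φ* − φ_k), φ* − φ_k⟩ ≤ e^{−2σk}⟨A(φ* − φ₀), φ* − φ₀⟩` with `σ = log((M+m)/(M−m))`. -/
theorem stmt_11 {H : Type*} [NormedAddCommGroup H] [InnerProductSpace ℝ H] [CompleteSpace H]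
    (A : H →L[ℝ] H) (hsa : ∀ x y : H, ⟪A x, y⟫ = ⟪x, A y⟫)
    (m M : ℝ) (hm : 0 < m) (hmM : m < M)
    (hlow : ∀ x : H, m * ‖x‖ ^ 2 ≤ ⟪A x, x⟫)
    (hupp : ∀ x : H, ⟪A x, x⟫ ≤ M * ‖x‖ ^ 2)
    (ζ φstar : H) (hsol : A φstar = ζ)
    (φ r s : ℕ → H)
    (hr0 : r 0 = ζ - A (φ 0)) (hs0 : s 0 = r 0)
    (hφ : ∀ k, φ (k + 1) = φ k + (‖r k‖ ^ 2 / ⟪s k, A (s k)⟫) • s k)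
    (hr : ∀ k, r (k + 1) = ζ - A (φ (k + 1)))
    (hs : ∀ k, s (k + 1) = r (k + 1) + (‖r (k + 1)‖ ^ 2 / ‖r k‖ ^ 2) • s k) :
    ∀ k : ℕ, ⟪A (φstar - φ k), φstar - φ k⟫ ≤
      Real.exp (-2 * Real.log ((M + m) / (M - m)) * k) * ⟪A (φstar - φ 0), φstar - φ 0⟫ := by
  have hMms : (0:ℝ) < M - m := by linarith
  have hMma : (0:ℝ) < M + m := by linarith
  have hrk : ∀ k, r k = ζ - A (φ k) := by
    intro k
    cases k with
    | zero => exact hr0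
    | succ n => exact hr n
  have hAe : ∀ k, A (φstar - φ k) = r k := by
    intro k; rw [map_sub, hsol, ← hrk]
  set ρ2 : ℝ := ((M - m) / (M + m)) ^ 2 with hρ2def
  have hρ2nn : (0:ℝ) ≤ ρ2 := sq_nonneg _
  have hE0 : 0 ≤ ⟪A (φstar - φ 0), φstar - φ 0⟫ := le_trans (by positivity) (hlow _)
  have key : ∀ k, ⟪r k, s k⟫ = ‖r k‖ ^ 2 ∧ ⟪A (s k), s k - r k⟫ = 0 ∧
      ⟪A (s k), s k⟫ ≤ ⟪A (r k), r k⟫ ∧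
      ⟪A (φstar - φ k), φstar - φ k⟫ ≤ ρ2 ^ k * ⟪A (φstar - φ 0), φstar - φ 0⟫ := by
    intro k; induction k with
    | zero =>
      refine ⟨?_, ?_, le_of_eq ?_, by simp⟩
      · rw [hs0, real_inner_self_eq_norm_sq]
      · rw [hs0]; simp
      · rw [hs0]
    | succ k ih =>
      obtain ⟨inv2, inv4, inv3, inv5⟩ := ih
      by_cases h0 : r k = 0
      · have hα : (‖r k‖ ^ 2 / ⟪s k, A (s k)⟫ : ℝ) = 0 := by rw [h0]; simp
        have hφ1 : φ (k + 1) = φ k := by rw [hφ, hα, zero_smul, add_zero]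
        have hr1 : r (k + 1) = 0 := by rw [hrk (k+1), hφ1, ← hrk k, h0]
        have hs1 : s (k + 1) = 0 := by rw [hs k, hr1, h0]; simp
        have hA1 : A (φstar - φ (k+1)) = 0 := by rw [hAe, hr1]
        refine ⟨by rw [hr1, hs1]; simp, by rw [hs1]; simp, by rw [hr1, hs1], ?_⟩
        rw [hA1, inner_zero_left]
        exact mul_nonneg (pow_nonneg hρ2nn _) hE0
      · set b := ‖r k‖ ^ 2 with hbdef
        set d := ⟪s k, A (s k)⟫ with hddef
        have hb : (0:ℝ) < b := pow_pos (norm_pos_iff.mpr h0) 2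
        have hsne : s k ≠ 0 := by
          intro hs'
          have : b = 0 := by rw [← inv2, hs', inner_zero_right]
          exact hb.ne' this
        have hdsym : d = ⟪A (s k), s k⟫ := real_inner_comm _ _
        have hd : (0:ℝ) < d := by
          rw [hdsym]
          exact lt_of_lt_of_le (mul_pos hm (pow_pos (norm_pos_iff.mpr hsne) 2)) (hlow (s k))
        have hrstep : r (k + 1) = r k - (b / d) • A (s k) := by
          rw [hrk (k+1), hφ k, map_add, map_smul, ← hbdef, ← hddef, hrk k]
          abel
        have h_rs1 : ⟪r (k + 1), s k⟫ = 0 := by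
          rw [hrstep, inner_sub_left, real_inner_smul_left, ← hdsym, inv2,
            div_mul_cancel₀ _ hd.ne', sub_self]
        have h_rr1 : ⟪r (k + 1), r k⟫ = 0 := by
          have h1 : ⟪r (k + 1), s k - r k⟫ = 0 := by
            rw [hrstep, inner_sub_left, real_inner_smul_left, inv4, mul_zero, sub_zero,
              inner_sub_right, inv2, real_inner_self_eq_norm_sq, sub_self]
          have h2 : ⟪r (k+1), s k - r k⟫ = ⟪r (k+1), s k⟫ - ⟪r (k+1), r k⟫ :=
            inner_sub_right _ _ _
          rw [h1, h_rs1] at h2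
          linarith
        set b' := ‖r (k + 1)‖ ^ 2 with hb'def
        have hb'nn : (0:ℝ) ≤ b' := sq_nonneg _
        have hb'' : ⟪r (k+1), r (k+1)⟫ = b' := real_inner_self_eq_norm_sq _
        have hcap : (b/d) • A (s k) = r k - r (k+1) := by rw [hrstep]; abel
        have hAsr : ⟪A (s k), r (k + 1)⟫ = -((b' / b) * d) := by
          have h1 : (b / d) * ⟪A (s k), r (k + 1)⟫ = -b' := by
            rw [← real_inner_smul_left, hcap, inner_sub_left, real_inner_comm (r (k+1)) (r k)]
            rw [h_rr1, hb'']; ring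
          field_simp at h1 ⊢
          linarith [h1]
        have hconj : ⟪A (s (k + 1)), s k⟫ = 0 := by
          rw [hsa, hs k, inner_add_left, real_inner_smul_left,
            real_inner_comm (A (s k)) (r (k+1)), hAsr, ← hddef, ← hb'def, ← hbdef]
          ring
        have inv2' : ⟪r (k+1), s (k+1)⟫ = ‖r (k+1)‖ ^ 2 := by
          rw [hs k, inner_add_right, real_inner_smul_right, h_rs1, hb'']; ring
        have inv4' : ⟪A (s (k+1)), s (k+1) - r (k+1)⟫ = 0 := by
          have hdd : s (k+1) - r (k+1) = (b'/b) • s k := by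
            rw [hs k, ← hb'def, ← hbdef]; abel
          rw [hdd, real_inner_smul_right, hconj, mul_zero]
        have inv3' : ⟪A (s (k+1)), s (k+1)⟫ ≤ ⟪A (r (k+1)), r (k+1)⟫ := by
          have hAr_s : ⟪A (r (k+1)), s k⟫ = -((b' / b) * d) := by
            rw [hsa, real_inner_comm (A (s k)) (r (k+1)), hAsr]
          have hexp2 : ⟪A (s (k+1)), s (k+1)⟫
              = ⟪A (r (k+1)), r (k+1)⟫ - (b'/b)^2 * d := by
            conv_lhs => rw [hs k]
            simp only [map_add, map_smul, inner_add_left, inner_add_right,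
              real_inner_smul_left, real_inner_smul_right]
            rw [hAr_s, hAsr, ← hdsym, ← hb'def, ← hbdef]
            ring
          have hnn : 0 ≤ (b'/b)^2 * d := mul_nonneg (sq_nonneg _) hd.le
          linarith [hexp2, hnn]
        set e := φstar - φ k with hEdef
        have heq : φstar - φ (k+1) = e - (b/d) • s k := by
          rw [hφ k, ← hbdef, ← hddef, hEdef]; abel
        have hAes : ⟪A e, s k⟫ = b := by rw [hEdef, hAe k]; exact inv2
        have hAse : ⟪A (s k), e⟫ = b := by
          rw [hsa, real_inner_comm (A e) (s k), hEdef, hAe k]; exact inv2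
        have hEstep : ⟪A (φstar - φ (k+1)), φstar - φ (k+1)⟫ = ⟪A e, e⟫ - b^2 / d := by
          rw [heq]
          simp only [map_sub, map_smul, inner_sub_left, inner_sub_right,
            real_inner_smul_left, real_inner_smul_right]
          rw [hAes, hAse, ← hdsym]
          field_simp
          ring
        have hk2 := kantorovich A hsa m M hm hmM hlow hupp e
        have h_re : ⟪A e, e⟫ = ⟪r k, e⟫ := by rw [hEdef, hAe k]
        have h_rr : ⟪r k, r k⟫ = b := real_inner_self_eq_norm_sq _
        rw [hEdef, hAe k, h_rr, ← hEdef, ← h_re] at hk2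
        set a := ⟪A e, e⟫ with hadef
        set c := ⟪A (r k), r k⟫ with hcdef
        have hc : (0:ℝ) < c := lt_of_lt_of_le (mul_pos hm hb) (hlow (r k))
        have hdc : d ≤ c := by rw [hdsym]; exact inv3
        have ha : 0 ≤ a := le_trans (by positivity) (hlow _)
        have hMm2 : (0:ℝ) < (M + m)^2 := by positivity
        have hstep : a - b^2/d ≤ ρ2 * a := by
          have h1 : b^2/c ≤ b^2/d := by gcongr
          have e2 : 1 - ρ2 = 4*M*m/(M+m)^2 := by
            rw [hρ2def, div_pow, eq_div_iff hMm2.ne', sub_mul, one_mul,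
              div_mul_cancel₀ _ hMm2.ne']
            ring
          have h2 : (1 - ρ2) * a ≤ b^2/c := by
            rw [le_div_iff₀ hc, e2, div_mul_eq_mul_div, div_mul_eq_mul_div,
              div_le_iff₀ hMm2]
            linarith [hk2]
          linarith [h1, h2]
        refine ⟨inv2', inv4', inv3', ?_⟩
        rw [hEstep]
        calc a - b^2/d ≤ ρ2 * a := hstep
          _ ≤ ρ2 * (ρ2^k * ⟪A (φstar - φ 0), φstar - φ 0⟫) :=
              mul_le_mul_of_nonneg_left inv5 hρ2nn
          _ = ρ2^(k+1) * ⟪A (φstar - φ 0), φstar - φ 0⟫ := by ring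
  intro k
  have hexp : Real.exp (-2 * Real.log ((M + m) / (M - m)) * (k:ℝ)) = ρ2 ^ k := by
    have h1 : (-2 * Real.log ((M + m) / (M - m)) * (k:ℝ))
        = (k:ℝ) * Real.log (((M - m) / (M + m)) ^ 2) := by
      rw [show (M - m) / (M + m) = ((M + m) / (M - m))⁻¹ by rw [inv_div], Real.log_pow,
        Real.log_inv]
      push_cast; ring
    rw [h1, Real.exp_nat_mul, Real.exp_log (by positivity)]
  rw [hexp]
  exact (key k).2.2.2
end

section
/- For every k ≥ 0 the conjugate gradient iterates satisfy the convergence estimate ‖φ* − φ_k‖ ≤ √(M/m) · e^{−σk} · ‖φ* − φ₀‖ in the norm of H, where σ = log((M+m)/(M−m)). -/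
/-!
The residual `r k = A (φ* - φ k)` of the conjugate gradient method is orthogonal to the span
`S k` of the first `k` search directions, and `A` maps `S n` into `S (n + 1)`. Hence the error
`φ* - φ k` minimises the energy `⟪A e, e⟫` over `(φ* - φ 0) + S k`, which contains the error
`Bᵏ (φ* - φ 0)` of Richardson's iteration `B = 1 - (2 / (M + m)) A`. As `A` is symmetric with
spectrum in `[m, M]`, `‖B‖ ≤ (M - m) / (M + m) = e^{-σ}`, so
`m ‖φ* - φ k‖² ≤ ⟪A Bᵏ e₀, Bᵏ e₀⟫ ≤ M e^{-2σk} ‖e₀‖²`.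
-/

open scoped RealInnerProductSpace

section Krylov

variable {R M : Type*} [Ring R] [AddCommGroup M] [Module R M]

theorem iterate_sub_mem_of_forall_sub_mem {S : ℕ → Submodule R M} (hS : Monotone S)
    {f : M →ₗ[R] M} (hf : ∀ n, ∀ y ∈ S n, f y - y ∈ S (n + 1)) {x : M} (hx : f x - x ∈ S 1) :
    ∀ n, f^[n] x - x ∈ S n
  | 0 => by simp
  | n + 1 => by
    have ih := iterate_sub_mem_of_forall_sub_mem hS hf hx n
    have h : f^[n + 1] x - x = (f (f^[n] x - x) - (f^[n] x - x)) + (f x - x) + (f^[n] x - x) := by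
      rw [Function.iterate_succ_apply', map_sub]; abel
    rw [h]
    exact add_mem (add_mem (hf n _ ih) (hS (by omega) hx)) (hS n.le_succ ih)

end Krylov

section Energy

variable {E : Type*} [NormedAddCommGroup E] [InnerProductSpace ℝ E]

theorem LinearMap.IsSymmetric.inner_map_self_le_of_inner_map_sub_eq_zero {T : E →ₗ[ℝ] E}
    (hT : T.IsSymmetric) (hnn : ∀ x, 0 ≤ ⟪T x, x⟫) {x y : E} (h : ⟪T x, y - x⟫ = 0) :
    ⟪T x, x⟫ ≤ ⟪T y, y⟫ := by
  have hexp : ⟪T y, y⟫ = ⟪T x, x⟫ + 2 * ⟪T x, y - x⟫ + ⟪T (y - x), y - x⟫ := by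
    rw [map_sub, inner_sub_left, inner_sub_right, inner_sub_right,
      hT y x, real_inner_comm (T x) y]
    ring
  rw [hexp, h]
  linarith [hnn (y - x)]

theorem LinearMap.IsSymmetric.norm_le_of_abs_inner_le {T : E →L[ℝ] E} (hT : T.IsSymmetric)
    {ρ : ℝ} (hρ : 0 ≤ ρ) (h : ∀ x, |⟪T x, x⟫| ≤ ρ * ‖x‖ ^ 2) : ‖T‖ ≤ ρ := by
  rw [T.norm_eq_iSup_rayleighQuotient hT]
  refine ciSup_le fun x => ?_
  rcases eq_or_ne x 0 with rfl | hx
  · simpa using hρ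
  · have : 0 < ‖x‖ ^ 2 := by positivity
    simpa [ContinuousLinearMap.reApplyInnerSelf_apply, abs_div, div_le_iff₀ this] using h x

theorem LinearMap.IsSymmetric.norm_one_sub_smul_le {T : E →L[ℝ] E} (hT : T.IsSymmetric)
    {m M : ℝ} (hMm : 0 < M + m) (hmM : m ≤ M) (hlow : ∀ x, m * ‖x‖ ^ 2 ≤ ⟪T x, x⟫)
    (hupp : ∀ x, ⟪T x, x⟫ ≤ M * ‖x‖ ^ 2) :
    ‖1 - (2 / (M + m)) • T‖ ≤ (M - m) / (M + m) := by
  set c := 2 / (M + m)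
  have hc : 0 ≤ c := by positivity
  have hsymm : ((1 - c • T : E →L[ℝ] E) : E →ₗ[ℝ] E).IsSymmetric := fun x y => by
    simpa [inner_sub_left, inner_sub_right, real_inner_smul_left, real_inner_smul_right]
      using Or.inl (hT x y)
  refine hsymm.norm_le_of_abs_inner_le (by bound) fun x => ?_
  have hval : ⟪(1 - c • T) x, x⟫ = ‖x‖ ^ 2 - c * ⟪T x, x⟫ := by
    simp [inner_sub_left, real_inner_smul_left]
  have hlo := mul_le_mul_of_nonneg_left (hlow x) hc
  have hup := mul_le_mul_of_nonneg_left (hupp x) hc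
  have e1 : ‖x‖ ^ 2 - c * (m * ‖x‖ ^ 2) = (M - m) / (M + m) * ‖x‖ ^ 2 := by
    simp only [c]; field_simp; ring
  have e2 : ‖x‖ ^ 2 - c * (M * ‖x‖ ^ 2) = -((M - m) / (M + m) * ‖x‖ ^ 2) := by
    simp only [c]; field_simp; ring
  rw [hval, abs_le]
  constructor <;> linarith

end Energy

section ConjugateGradient

variable {H : Type*} [NormedAddCommGroup H] [InnerProductSpace ℝ H]

/-- Once a residual vanishes, `x / 0 = 0` makes every later step zero. -/
structure IsConjugateGradient (A : H →ₗ[ℝ] H) (ζ : H) (φ r s : ℕ → H) : Prop where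
  residual_eq : ∀ k, r k = ζ - A (φ k)
  dir_zero : s 0 = r 0
  iterate_succ : ∀ k, φ (k + 1) = φ k + (‖r k‖ ^ 2 / ⟪s k, A (s k)⟫) • s k
  dir_succ : ∀ k, s (k + 1) = r (k + 1) + (‖r (k + 1)‖ ^ 2 / ‖r k‖ ^ 2) • s k

def searchSpace (s : ℕ → H) (n : ℕ) : Submodule ℝ H :=
  Submodule.span ℝ (s '' Set.Iio n)

theorem searchSpace_mono (s : ℕ → H) : Monotone (searchSpace s) :=
  fun _ _ h => Submodule.span_mono (Set.image_mono (Set.Iio_subset_Iio h))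

theorem mem_searchSpace (s : ℕ → H) {j n : ℕ} (h : j < n) : s j ∈ searchSpace s n :=
  Submodule.subset_span ⟨j, h, rfl⟩

theorem inner_eq_zero_of_mem_searchSpace {s : ℕ → H} {n : ℕ} {x y : H}
    (hx : ∀ j < n, ⟪x, s j⟫ = 0) (hy : y ∈ searchSpace s n) : ⟪x, y⟫ = 0 := by
  have : searchSpace s n ≤ (ℝ ∙ x)ᗮ := Submodule.span_le.mpr <| by
    rintro _ ⟨j, hj, rfl⟩
    exact Submodule.mem_orthogonal_singleton_iff_inner_right.mpr (hx j hj)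
  exact Submodule.mem_orthogonal_singleton_iff_inner_right.mp (this hy)

namespace IsConjugateGradient

variable {A : H →ₗ[ℝ] H} {ζ : H} {φ r s : ℕ → H} (h : IsConjugateGradient A ζ φ r s)
include h

theorem residual_succ (k : ℕ) :
    r (k + 1) = r k - (‖r k‖ ^ 2 / ⟪s k, A (s k)⟫) • A (s k) := by
  rw [h.residual_eq, h.iterate_succ, map_add, map_smul, h.residual_eq]
  abel

theorem dir_eq_zero {k : ℕ} (hk : r k = 0) : s k = 0 := by
  cases k with
  | zero => rw [h.dir_zero, hk]
  | succ k => rw [h.dir_succ, hk, norm_zero]; simp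

theorem residual_mem_searchSpace : ∀ k, r k ∈ searchSpace s (k + 1)
  | 0 => h.dir_zero ▸ mem_searchSpace s zero_lt_one
  | k + 1 => by
    have : r (k + 1) = s (k + 1) - (‖r (k + 1)‖ ^ 2 / ‖r k‖ ^ 2) • s k := by
      rw [h.dir_succ]; abel
    rw [this]
    exact sub_mem (mem_searchSpace s (by omega))
      (Submodule.smul_mem _ _ (mem_searchSpace s (by omega)))

theorem iterate_sub_mem_searchSpace : ∀ k, φ k - φ 0 ∈ searchSpace s k
  | 0 => by simp
  | k + 1 => by
    have : φ (k + 1) - φ 0 = (φ k - φ 0) + (‖r k‖ ^ 2 / ⟪s k, A (s k)⟫) • s k := by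
      rw [h.iterate_succ]; abel
    rw [this]
    exact add_mem (searchSpace_mono s k.le_succ (iterate_sub_mem_searchSpace k))
      (Submodule.smul_mem _ _ (mem_searchSpace s k.lt_succ_self))

variable (hpos : ∀ x ≠ 0, 0 < ⟪A x, x⟫)
include hpos

theorem exists_map_dir_eq_smul (k : ℕ) : ∃ c : ℝ, A (s k) = c • (r k - r (k + 1)) := by
  by_cases hs : s k = 0
  · exact ⟨0, by simp [hs]⟩
  have hr : r k ≠ 0 := mt h.dir_eq_zero hs
  have hq : 0 < ⟪s k, A (s k)⟫ := real_inner_comm (s k) _ ▸ hpos _ hs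
  refine ⟨(‖r k‖ ^ 2 / ⟪s k, A (s k)⟫)⁻¹, ?_⟩
  rw [h.residual_succ, sub_sub_cancel, smul_smul, inv_mul_cancel₀ (by positivity), one_smul]

theorem map_searchSpace_le (n : ℕ) : (searchSpace s n).map A ≤ searchSpace s (n + 1) := by
  rw [searchSpace, Submodule.map_span, Submodule.span_le]
  rintro _ ⟨_, ⟨j, hj, rfl⟩, rfl⟩
  obtain ⟨c, hc⟩ := h.exists_map_dir_eq_smul hpos j
  rw [hc]
  have hj : j + 2 ≤ n + 1 := by simp only [Set.mem_Iio] at hj; omega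
  exact Submodule.smul_mem _ _ (sub_mem
    (searchSpace_mono s (by omega) (h.residual_mem_searchSpace j))
    (searchSpace_mono s hj (h.residual_mem_searchSpace (j + 1))))

theorem inner_dir_succ_map_dir {n : ℕ} (hrs_self : ⟪r n, s n⟫ = ‖r n‖ ^ 2)
    (hss : ∀ j < n, ⟪s n, A (s j)⟫ = 0) (hrs : ∀ j < n + 1, ⟪r (n + 1), s j⟫ = 0) :
    ∀ j < n + 1, ⟪s (n + 1), A (s j)⟫ = 0 := by
  have hrr : ∀ j < n + 1, ⟪r (n + 1), r j⟫ = 0 := fun j hj =>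
    inner_eq_zero_of_mem_searchSpace hrs
      (searchSpace_mono s (by omega) (h.residual_mem_searchSpace j))
  intro j hj
  rw [h.dir_succ, inner_add_left, real_inner_smul_left]
  rcases Nat.lt_succ_iff_lt_or_eq.mp hj with hj | rfl
  · obtain ⟨c, hc⟩ := h.exists_map_dir_eq_smul hpos j
    rw [hss j hj, hc, real_inner_smul_right, inner_sub_right, hrr j (by omega),
      hrr (j + 1) (by omega)]
    ring
  by_cases hs : s j = 0
  · simp [hs]
  have hr : r j ≠ 0 := mt h.dir_eq_zero hs
  have hq : 0 < ⟪s j, A (s j)⟫ := real_inner_comm (s j) _ ▸ hpos _ hs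
  -- pair `r (j + 1) = r j - α • A (s j)` with `r (j + 1)`, which is orthogonal to `r j`
  have key := congrArg (⟪r (j + 1), ·⟫) (h.residual_succ j)
  simp only [inner_sub_right, real_inner_smul_right, real_inner_self_eq_norm_sq,
    hrr j j.lt_succ_self] at key
  have hr2 : 0 < ‖r j‖ ^ 2 := by positivity
  field_simp at key ⊢
  linarith

variable (hA : A.IsSymmetric)
include hA

theorem inner_residual_succ_dir {n : ℕ} (hrs : ∀ j < n, ⟪r n, s j⟫ = 0)
    (hrs_self : ⟪r n, s n⟫ = ‖r n‖ ^ 2) (hss : ∀ j < n, ⟪s n, A (s j)⟫ = 0) :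
    ∀ j < n + 1, ⟪r (n + 1), s j⟫ = 0 := by
  intro j hj
  rw [h.residual_succ, inner_sub_left, real_inner_smul_left, hA]
  rcases Nat.lt_succ_iff_lt_or_eq.mp hj with hj | rfl
  · rw [hrs j hj, hss j hj, mul_zero, sub_zero]
  by_cases hq : ⟪s j, A (s j)⟫ = 0
  · have hs : s j = 0 := by
      by_contra hs
      exact (hpos _ hs).ne' (real_inner_comm (s j) _ ▸ hq)
    rw [hs, inner_zero_right]
    simp
  · rw [hrs_self, div_mul_cancel₀ _ hq, sub_self]

theorem orthogonality (n : ℕ) :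
    (∀ j < n, ⟪r n, s j⟫ = 0) ∧ ⟪r n, s n⟫ = ‖r n‖ ^ 2 ∧ ∀ j < n, ⟪s n, A (s j)⟫ = 0 := by
  induction n with
  | zero => exact ⟨by simp, by rw [h.dir_zero, real_inner_self_eq_norm_sq], by simp⟩
  | succ n ih =>
    obtain ⟨hrs, hrs_self, hss⟩ := ih
    have hrs' := h.inner_residual_succ_dir hpos hA hrs hrs_self hss
    refine ⟨hrs', ?_, h.inner_dir_succ_map_dir hpos hrs_self hss hrs'⟩
    rw [h.dir_succ, inner_add_right, real_inner_smul_right, hrs' n n.lt_succ_self,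
      real_inner_self_eq_norm_sq, mul_zero, add_zero]

theorem inner_residual_eq_zero {n : ℕ} {y : H} (hy : y ∈ searchSpace s n) : ⟪r n, y⟫ = 0 :=
  inner_eq_zero_of_mem_searchSpace (h.orthogonality hpos hA n).1 hy

theorem inner_map_error_le_inner_map_iterate {φstar : H} (hsol : A φstar = ζ) {f : H →ₗ[ℝ] H}
    {c : ℝ} (hf : ∀ y, f y = y - c • A y) (k : ℕ) :
    ⟪A (φstar - φ k), φstar - φ k⟫ ≤ ⟪A (f^[k] (φstar - φ 0)), f^[k] (φstar - φ 0)⟫ := by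
  have herr : ∀ n, A (φstar - φ n) = r n := fun n => by rw [map_sub, hsol, h.residual_eq]
  have hfsub : ∀ y, f y - y = -(c • A y) := fun y => by rw [hf]; abel
  have hkrylov : f^[k] (φstar - φ 0) - (φstar - φ 0) ∈ searchSpace s k := by
    refine iterate_sub_mem_of_forall_sub_mem (searchSpace_mono s) (fun n y hy => ?_) ?_ k
    · rw [hfsub]
      exact neg_mem (Submodule.smul_mem _ _ (h.map_searchSpace_le hpos n ⟨y, hy, rfl⟩))
    · rw [hfsub, herr 0]
      exact neg_mem (Submodule.smul_mem _ _ (h.residual_mem_searchSpace 0))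
  have hnn : ∀ x, 0 ≤ ⟪A x, x⟫ := fun x => by
    rcases eq_or_ne x 0 with rfl | hx
    · simp
    · exact (hpos x hx).le
  refine hA.inner_map_self_le_of_inner_map_sub_eq_zero hnn ?_
  have : f^[k] (φstar - φ 0) - (φstar - φ k)
      = (f^[k] (φstar - φ 0) - (φstar - φ 0)) + (φ k - φ 0) := by abel
  rw [herr, this]
  exact h.inner_residual_eq_zero hpos hA (add_mem hkrylov (h.iterate_sub_mem_searchSpace k))

end IsConjugateGradient

end ConjugateGradient

theorem ContinuousLinearMap.norm_iterate_apply_le {𝕜 E : Type*} [NontriviallyNormedField 𝕜]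
    [SeminormedAddCommGroup E] [NormedSpace 𝕜 E] (T : E →L[𝕜] E) {ρ : ℝ} (hT : ‖T‖ ≤ ρ)
    (x : E) : ∀ n, ‖T^[n] x‖ ≤ ρ ^ n * ‖x‖
  | 0 => by simp
  | n + 1 => by
    rw [Function.iterate_succ_apply', pow_succ', mul_assoc]
    exact (T.le_of_opNorm_le hT _).trans <| mul_le_mul_of_nonneg_left
      (T.norm_iterate_apply_le hT x n) ((norm_nonneg T).trans hT)

theorem le_sqrt_div_mul_of_mul_sq_le {a b m M : ℝ} (hm : 0 < m) (hb : 0 ≤ b)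
    (h : m * a ^ 2 ≤ M * b ^ 2) : a ≤ √(M / m) * b := by
  have ha : a ^ 2 ≤ M / m * b ^ 2 := by
    rw [div_mul_eq_mul_div, le_div_iff₀ hm]; linarith
  calc a ≤ |a| := le_abs_self a
    _ ≤ √(M / m * b ^ 2) := Real.abs_le_sqrt ha
    _ = √(M / m) * b := by rw [Real.sqrt_mul' _ (sq_nonneg b), Real.sqrt_sq hb]

theorem stmt_12_general {H : Type*} [NormedAddCommGroup H] [InnerProductSpace ℝ H]
    (A : H →L[ℝ] H) (hsa : ∀ x y : H, ⟪A x, y⟫ = ⟪x, A y⟫)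
    (m M : ℝ) (hm : 0 < m) (hmM : m < M)
    (hlow : ∀ x : H, m * ‖x‖ ^ 2 ≤ ⟪A x, x⟫)
    (hupp : ∀ x : H, ⟪A x, x⟫ ≤ M * ‖x‖ ^ 2)
    (ζ φstar : H) (hsol : A φstar = ζ)
    (φ r s : ℕ → H)
    (hr0 : r 0 = ζ - A (φ 0)) (hs0 : s 0 = r 0)
    (hφ : ∀ k, φ (k + 1) = φ k + (‖r k‖ ^ 2 / ⟪s k, A (s k)⟫) • s k)
    (hr : ∀ k, r (k + 1) = ζ - A (φ (k + 1)))
    (hs : ∀ k, s (k + 1) = r (k + 1) + (‖r (k + 1)‖ ^ 2 / ‖r k‖ ^ 2) • s k) :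
    ∀ k : ℕ, ‖φstar - φ k‖ ≤
      Real.sqrt (M / m) * Real.exp (-Real.log ((M + m) / (M - m)) * k) * ‖φstar - φ 0‖ := by
  intro k
  have hcg : IsConjugateGradient (A : H →ₗ[ℝ] H) ζ φ r s :=
    ⟨fun n => n.casesOn hr0 hr, hs0, hφ, hs⟩
  have hpos : ∀ x ≠ 0, 0 < ⟪A x, x⟫ := fun x hx =>
    (by positivity : 0 < m * ‖x‖ ^ 2).trans_le (hlow x)
  set ρ := (M - m) / (M + m)
  set B : H →L[ℝ] H := 1 - (2 / (M + m)) • A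
  set e := φstar - φ 0
  have hB : ‖B‖ ≤ ρ :=
    LinearMap.IsSymmetric.norm_one_sub_smul_le hsa (by linarith) hmM.le hlow hupp
  have hopt := hcg.inner_map_error_le_inner_map_iterate hpos hsa hsol
    (f := (B : H →ₗ[ℝ] H)) (c := 2 / (M + m)) (fun y => by simp [B]) k
  have hexp : Real.exp (-Real.log ((M + m) / (M - m)) * k) = ρ ^ k := by
    rw [mul_comm, Real.exp_nat_mul, Real.exp_neg, Real.exp_log (by bound), inv_div]
  rw [hexp, mul_assoc]
  refine le_sqrt_div_mul_of_mul_sq_le hm (by bound) ?_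
  calc m * ‖φstar - φ k‖ ^ 2 ≤ ⟪A (φstar - φ k), φstar - φ k⟫ := hlow _
    _ ≤ ⟪A (B^[k] e), B^[k] e⟫ := hopt
    _ ≤ M * ‖B^[k] e‖ ^ 2 := hupp _
    _ ≤ M * (ρ ^ k * ‖e‖) ^ 2 := by
      gcongr
      · linarith
      · exact B.norm_iterate_apply_le hB e k

/-- Convergence of the conjugate gradient method in the norm of `H`:
`‖φ* − φ_k‖ ≤ √(M/m)·e^{−σk}·‖φ* − φ₀‖` with `σ = log((M+m)/(M−m))`. -/
theorem stmt_12 {H : Type*} [NormedAddCommGroup H] [InnerProductSpace ℝ H] [CompleteSpace H]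
    (A : H →L[ℝ] H) (hsa : ∀ x y : H, ⟪A x, y⟫ = ⟪x, A y⟫)
    (m M : ℝ) (hm : 0 < m) (hmM : m < M)
    (hlow : ∀ x : H, m * ‖x‖ ^ 2 ≤ ⟪A x, x⟫)
    (hupp : ∀ x : H, ⟪A x, x⟫ ≤ M * ‖x‖ ^ 2)
    (ζ φstar : H) (hsol : A φstar = ζ)
    (φ r s : ℕ → H)
    (hr0 : r 0 = ζ - A (φ 0)) (hs0 : s 0 = r 0)
    (hφ : ∀ k, φ (k + 1) = φ k + (‖r k‖ ^ 2 / ⟪s k, A (s k)⟫) • s k)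
    (hr : ∀ k, r (k + 1) = ζ - A (φ (k + 1)))
    (hs : ∀ k, s (k + 1) = r (k + 1) + (‖r (k + 1)‖ ^ 2 / ‖r k‖ ^ 2) • s k) :
    ∀ k : ℕ, ‖φstar - φ k‖ ≤
      Real.sqrt (M / m) * Real.exp (-Real.log ((M + m) / (M - m)) * k) * ‖φstar - φ 0‖ :=
  stmt_12_general A hsa m M hm hmM hlow hupp ζ φstar hsol φ r s hr0 hs0 hφ hr hs
end
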